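/- Quantifier inversion for miP-tV logical consequence: Γ ⊨ A (there exists a single argument ⟨D, J⟩ from Γ to A valid on every base) holds if and only if for every base B there exists an argument ⟨D, J⟩ from Γ to A valid on B. -/
import Mathlib


/-- Propositional atoms: `⊥` and countably many atoms `p n`. -/
inductive PAtom : Type
  | bot
  | p (n : ℕ)
deriving DecidableEq

/-- Formulas of the propositional language. -/
inductive Formula : Type
  | atom (a : PAtom)
  | and (A B : Formula)
  | or (A B : Formula)
  | imp (A B : Formula)
deriving DecidableEq

/-- Atomic rules (level ≤ 1): a list of atomic premises and an atomic conclusion.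
An axiom (level-0 rule) is `⟨[], a⟩`. -/
structure ARule where
  prems : List PAtom
  concl : PAtom
deriving DecidableEq

/-- The atomic explosion rules: from `⊥` infer any atom. -/
def AE : Set ARule := { r | ∃ a, r = ⟨[PAtom.bot], a⟩ }

/-- An atomic base is a set of atomic rules containing atomic explosion. -/
def IsBase (B : Set ARule) : Prop := AE ⊆ B

/-- Argument structures: natural-deduction-style trees with arbitrary inference
steps. `hyp A` is an assumption; `node c prems` is an inference to conclusion `c`
from the listed premise subtrees, where each premise comes with a list of
assumption-formulas it discharges in that subtree. An axiom is `node c []`. -/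
inductive Arg : Type
  | hyp (A : Formula)
  | node (concl : Formula) (prems : List (List Formula × Arg))

/-- Conclusion of an argument structure. -/
def Arg.concl : Arg → Formula
  | .hyp A => A
  | .node c _ => c

mutual
/-- The (open, i.e. undischarged) assumption-formulas of an argument structure. -/
def Arg.assumptions : Arg → Finset Formula
  | .hyp A => {A}
  | .node _ prems => assumptionsList prems

def assumptionsList : List (List Formula × Arg) → Finset Formula
  | [] => ∅
  | pr :: rest => (Arg.assumptions pr.2 \ pr.1.toFinset) ∪ assumptionsList rest
end

mutual
/-- Substitution of argument structures for the open assumptions of an argument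
structure; `bound` records the assumption-formulas discharged above. -/
def Arg.subst (σ : Formula → Arg) (bound : Finset Formula) : Arg → Arg
  | .hyp A => if A ∈ bound then .hyp A else σ A
  | .node c prems => .node c (substList σ bound prems)

def substList (σ : Formula → Arg) (bound : Finset Formula) :
    List (List Formula × Arg) → List (List Formula × Arg)
  | [] => []
  | pr :: rest => (pr.1, Arg.subst σ (bound ∪ pr.1.toFinset) pr.2) :: substList σ bound rest
end

/-- `AtomDeriv B D` : the argument structure `D` is an atomic derivation of the
base `B` (every node is an application of a rule of `B`). -/
inductive AtomDeriv (B : Set ARule) : Arg → Prop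
  | app (r : ARule) (hr : r ∈ B) (subs : List Arg)
      (hc : subs.map Arg.concl = r.prems.map Formula.atom)
      (hs : ∀ D ∈ subs, AtomDeriv B D) :
      AtomDeriv B (.node (.atom r.concl) (subs.map (fun D => ([], D))))

/-- A reduction is a partial function on argument structures. -/
abbrev Red := Arg → Option Arg

/-- One-step reduction relative to a set of reductions `J`: apply some `φ ∈ J` to
some substructure. -/
inductive Step (J : Set Red) : Arg → Arg → Prop
  | red {φ : Red} {D D' : Arg} : φ ∈ J → φ D = some D' → Step J D D'
  | congr {c : Formula} {pre post : List (List Formula × Arg)} {ds : List Formula}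
      {D D' : Arg} : Step J D D' →
      Step J (.node c (pre ++ (ds, D) :: post)) (.node c (pre ++ (ds, D') :: post))

/-- `D` reduces to `D'` relative to `J` (reflexive-transitive closure). -/
def Reduces (J : Set Red) : Arg → Arg → Prop := Relation.ReflTransGen (Step J)

/-- Validity of closed arguments `⟨D, J⟩` on a base `B`, by recursion on the
conclusion: a closed argument with atomic conclusion must reduce to an atomic
derivation of the base; one with compound conclusion must reduce to a canonical
(introduction-ended) closed structure whose immediate substructures are valid
(for `→`, valid as an open argument: under every extension of the reduction set
and of the base, substitution of valid closed arguments for the discharged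
assumption yields a valid closed argument). -/
def CValid : Formula → Set ARule → Set Red → Arg → Prop
  | .atom a, B, J, D => ∃ D', Reduces J D D' ∧ AtomDeriv B D' ∧ D'.concl = .atom a
  | .and A C, B, J, D => ∃ D1 D2 : Arg,
      Reduces J D (.node (A.and C) [([], D1), ([], D2)]) ∧
      D1.assumptions = ∅ ∧ D2.assumptions = ∅ ∧ D1.concl = A ∧ D2.concl = C ∧
      CValid A B J D1 ∧ CValid C B J D2
  | .or A C, B, J, D =>
      (∃ D1 : Arg, Reduces J D (.node (A.or C) [([], D1)]) ∧
        D1.assumptions = ∅ ∧ D1.concl = A ∧ CValid A B J D1) ∨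
      (∃ D1 : Arg, Reduces J D (.node (A.or C) [([], D1)]) ∧
        D1.assumptions = ∅ ∧ D1.concl = C ∧ CValid C B J D1)
  | .imp A C, B, J, D => ∃ D1 : Arg,
      Reduces J D (.node (A.imp C) [([A], D1)]) ∧
      D1.assumptions ⊆ {A} ∧ D1.concl = C ∧
      ∀ H : Set Red, J ⊆ H → ∀ X : Set ARule, B ⊆ X → ∀ E : Arg,
        E.assumptions = ∅ → E.concl = A → CValid A X H E →
        CValid C X H (Arg.subst (fun _ => E) ∅ D1)

/-- Validity of an argument `⟨D, J⟩` on a base `B` (Prawitz, monotonic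
introduction-based form): closed arguments as in `CValid`; an open argument is
valid iff for every extension `H ⊇ J` of the reduction set, every extension
`X ⊇ B` of the base, and every assignment of closed arguments valid on `X`
(w.r.t. `H`) to its open assumptions, the resulting closed instance is valid
on `X` w.r.t. `H`. -/
def Valid (B : Set ARule) (D : Arg) (J : Set Red) : Prop :=
  if D.assumptions = ∅ then CValid D.concl B J D
  else ∀ (σ : Formula → Arg) (H : Set Red) (X : Set ARule), J ⊆ H → B ⊆ X →
    (∀ A ∈ D.assumptions, (σ A).assumptions = ∅ ∧ (σ A).concl = A ∧ CValid A X H (σ A)) →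
    CValid D.concl X H (Arg.subst σ ∅ D)

/-- Logical validity: validity on every atomic base. -/
def LValid (D : Arg) (J : Set Red) : Prop :=
  ∀ B : Set ARule, IsBase B → Valid B D J

/-- miP-tV consequence over a base: `Γ ⊨_B A` iff there is an argument `⟨D, J⟩`
valid on `B` with `D` an argument structure from `Γ` to `A`. -/
def EntailsOn (B : Set ARule) (Γ : Finset Formula) (A : Formula) : Prop :=
  ∃ (D : Arg) (J : Set Red), D.assumptions = Γ ∧ D.concl = A ∧ Valid B D J

/-- miP-tV logical consequence: `Γ ⊨ A` iff there is a logically valid argument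
`⟨D, J⟩` with `D` from `Γ` to `A`. -/
def Entails (Γ : Finset Formula) (A : Formula) : Prop :=
  ∃ (D : Arg) (J : Set Red), D.assumptions = Γ ∧ D.concl = A ∧ LValid D J

lemma atomDeriv_mono {B1 B2 : Set ARule} (h : B1 ⊆ B2) {D : Arg}
    (hd : AtomDeriv B1 D) : AtomDeriv B2 D := by
  induction hd with
  | app r hr subs hc _ ih => exact .app r (h hr) subs hc ih

lemma cvalid_mono : ∀ (A : Formula) {B1 B2 : Set ARule}, B1 ⊆ B2 →
    ∀ {J : Set Red} {D : Arg}, CValid A B1 J D → CValid A B2 J D := by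
  intro A
  induction A with
  | atom a =>
    rintro B1 B2 h J D ⟨D', h1, h2, h3⟩
    exact ⟨D', h1, atomDeriv_mono h h2, h3⟩
  | and A C ihA ihC =>
    rintro B1 B2 h J D ⟨D1, D2, r, a1, a2, c1, c2, v1, v2⟩
    exact ⟨D1, D2, r, a1, a2, c1, c2, ihA h v1, ihC h v2⟩
  | or A C ihA ihC =>
    rintro B1 B2 h J D (⟨D1, r, a, c, v⟩ | ⟨D1, r, a, c, v⟩)
    · exact Or.inl ⟨D1, r, a, c, ihA h v⟩
    · exact Or.inr ⟨D1, r, a, c, ihC h v⟩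
  | imp A C ihA ihC =>
    rintro B1 B2 h J D ⟨D1, r, a, c, hv⟩
    exact ⟨D1, r, a, c, fun H hJ X hX E he hc hce =>
      hv H hJ X (h.trans hX) E he hc hce⟩

lemma valid_mono {B1 B2 : Set ARule} (h : B1 ⊆ B2) {D : Arg} {J : Set Red}
    (hv : Valid B1 D J) : Valid B2 D J := by
  unfold Valid at *
  split
  · rw [if_pos ‹_›] at hv
    exact cvalid_mono _ h hv
  · rw [if_neg ‹_›] at hv
    exact fun σ H X hJ hX hσ => hv σ H X hJ (h.trans hX) hσ

/-- quantifier inversion for miP-tV logical consequence: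
`Γ ⊨ A` (a single argument from `Γ` to `A` valid on every base) holds iff for
every base `B` there exists an argument from `Γ` to `A` valid on `B`. -/
theorem entails_quantifier_inversion (Γ : Finset Formula) (A : Formula) :
    Entails Γ A ↔ ∀ B : Set ARule, IsBase B → EntailsOn B Γ A := by
  constructor
  · rintro ⟨D, J, ha, hc, hl⟩ B hB
    exact ⟨D, J, ha, hc, hl B hB⟩
  · intro h
    obtain ⟨D, J, ha, hc, hv⟩ := h AE (subset_refl _)
    exact ⟨D, J, ha, hc, fun B hB => valid_mono hB hv⟩
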